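/- arXiv:1710.06428 — 2 statements merged into one kernel-verified Lean document; each statement's English description precedes it below -/
import Mathlib

section
/- Let ω = iτ − |τ|n ∈ ℂ³ where τ, n ∈ ℝ³, τ ≠ 0, |n| = 1, and τ·n = 0. If w ∈ ℂ³ satisfies ω × w = 0 and ω(ω·w) = 0, and additionally n·w = 0, then w = 0. -/
noncomputable section

open Complex

def dotC (a b : Fin 3 → ℂ) : ℂ := ∑ i, a i * b i

def crossC (a b : Fin 3 → ℂ) : Fin 3 → ℂ :=
  ![a 1 * b 2 - a 2 * b 1, a 2 * b 0 - a 0 * b 2, a 0 * b 1 - a 1 * b 0]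

def dotR (a b : Fin 3 → ℝ) : ℝ := ∑ i, a i * b i

/-- Lopatinskii condition: with `ω = iτ − |τ|n`, `τ ≠ 0`, `|n| = 1`,
`τ·n = 0`, any `w ∈ ℂ³` with `ω × w = 0`, `ω (ω·w) = 0` and `n·w = 0` vanishes. -/
theorem lopatinskii_condition (τ n : Fin 3 → ℝ) (hτ : τ ≠ 0)
    (hn : dotR n n = 1) (hτn : dotR τ n = 0) (w : Fin 3 → ℂ)
    (ω : Fin 3 → ℂ)
    (hω : ω = fun i => Complex.I * (τ i : ℂ) - (Real.sqrt (dotR τ τ) : ℂ) * (n i : ℂ))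
    (h1 : crossC ω w = 0)
    (h2 : (fun i => ω i * dotC ω w) = (0 : Fin 3 → ℂ))
    (h3 : dotC (fun i => (n i : ℂ)) w = 0) :
    w = 0 := by
  have hτττ : dotR τ τ = τ 0 * τ 0 + τ 1 * τ 1 + τ 2 * τ 2 := by
    simp [dotR, Fin.sum_univ_three]
  have hpos : 0 < dotR τ τ := by
    rw [hτττ]
    have h : τ 0 ≠ 0 ∨ τ 1 ≠ 0 ∨ τ 2 ≠ 0 := by
      by_contra h; push_neg at h
      exact hτ (funext fun i => by fin_cases i <;> simp [h.1, h.2.1, h.2.2])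
    rcases h with h | h | h <;>
      nlinarith [mul_self_nonneg (τ 0), mul_self_nonneg (τ 1), mul_self_nonneg (τ 2),
        mul_self_pos.mpr h]
  set s : ℝ := Real.sqrt (dotR τ τ) with hsdef
  have hs2 : s ^ 2 = dotR τ τ := Real.sq_sqrt hpos.le
  have hs0 : s ≠ 0 := by positivity
  have hA : ((τ 0 : ℂ)) ^ 2 + ((τ 1 : ℂ)) ^ 2 + ((τ 2 : ℂ)) ^ 2 = ((s : ℂ)) ^ 2 := by
    rw [hτττ] at hs2
    have : ((s ^ 2 : ℝ) : ℂ) = ((τ 0 * τ 0 + τ 1 * τ 1 + τ 2 * τ 2 : ℝ) : ℂ) := by rw [hs2]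
    push_cast at this
    linear_combination -this
  have hB : ((n 0 : ℂ)) ^ 2 + ((n 1 : ℂ)) ^ 2 + ((n 2 : ℂ)) ^ 2 = 1 := by
    have h' : n 0 * n 0 + n 1 * n 1 + n 2 * n 2 = 1 := by
      have := hn; simpa [dotR, Fin.sum_univ_three] using this
    have : ((n 0 * n 0 + n 1 * n 1 + n 2 * n 2 : ℝ) : ℂ) = 1 := by rw [h']; norm_num
    push_cast at this
    linear_combination this
  have hC : (τ 0 : ℂ) * (n 0 : ℂ) + (τ 1 : ℂ) * (n 1 : ℂ) + (τ 2 : ℂ) * (n 2 : ℂ) = 0 := by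
    have h' : τ 0 * n 0 + τ 1 * n 1 + τ 2 * n 2 = 0 := by
      have := hτn; simpa [dotR, Fin.sum_univ_three] using this
    have : ((τ 0 * n 0 + τ 1 * n 1 + τ 2 * n 2 : ℝ) : ℂ) = 0 := by rw [h']; norm_num
    push_cast at this
    linear_combination this
  set a0 : ℂ := (τ 0 : ℂ); set a1 : ℂ := (τ 1 : ℂ); set a2 : ℂ := (τ 2 : ℂ)
  set b0 : ℂ := (n 0 : ℂ); set b1 : ℂ := (n 1 : ℂ); set b2 : ℂ := (n 2 : ℂ)
  set S : ℂ := (s : ℂ) with hSdef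
  have hS0 : S ≠ 0 := Complex.ofReal_ne_zero.mpr hs0
  have e0 : (I * a1 - S * b1) * w 2 - (I * a2 - S * b2) * w 1 = 0 := by
    have := congrFun h1 0; rw [hω] at this; simpa [crossC] using this
  have e1 : (I * a2 - S * b2) * w 0 - (I * a0 - S * b0) * w 2 = 0 := by
    have := congrFun h1 1; rw [hω] at this; simpa [crossC] using this
  have e2 : (I * a0 - S * b0) * w 1 - (I * a1 - S * b1) * w 0 = 0 := by
    have := congrFun h1 2; rw [hω] at this; simpa [crossC] using this
  have h3' : b0 * w 0 + b1 * w 1 + b2 * w 2 = 0 := by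
    have := h3; simp only [dotC, Fin.sum_univ_three] at this
    linear_combination this
  set D : ℂ := (-I * a0 - S * b0) * w 0 + (-I * a1 - S * b1) * w 1
      + (-I * a2 - S * b2) * w 2 with hD
  have key0 : w 0 * (2 * S ^ 2) = (I * a0 - S * b0) * D := by
    linear_combination (-I * a2 - S * b2) * e1 - (-I * a1 - S * b1) * e2 +
      (w 0 * I ^ 2) * hA + (w 0 * S ^ 2) * Complex.I_sq - (w 0 * S ^ 2) * hB
  have key1 : w 1 * (2 * S ^ 2) = (I * a1 - S * b1) * D := by
    linear_combination (-I * a0 - S * b0) * e2 - (-I * a2 - S * b2) * e0 +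
      (w 1 * I ^ 2) * hA + (w 1 * S ^ 2) * Complex.I_sq - (w 1 * S ^ 2) * hB
  have key2 : w 2 * (2 * S ^ 2) = (I * a2 - S * b2) * D := by
    linear_combination (-I * a1 - S * b1) * e0 - (-I * a0 - S * b0) * e1 +
      (w 2 * I ^ 2) * hA + (w 2 * S ^ 2) * Complex.I_sq - (w 2 * S ^ 2) * hB
  have hSD : S * D = 0 := by
    linear_combination b0 * key0 + b1 * key1 + b2 * key2 - 2 * S ^ 2 * h3' +
      I * D * hC - S * D * hB
  have hDzero : D = 0 := (mul_eq_zero.mp hSD).resolve_left hS0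
  have h2S : (2 * S ^ 2 : ℂ) ≠ 0 := by simp [pow_eq_zero_iff, hS0]
  funext i
  fin_cases i
  · have := key0; rw [hDzero, mul_zero] at this
    simpa using (mul_eq_zero.mp this).resolve_right h2S
  · have := key1; rw [hDzero, mul_zero] at this
    simpa using (mul_eq_zero.mp this).resolve_right h2S
  · have := key2; rw [hDzero, mul_zero] at this
    simpa using (mul_eq_zero.mp this).resolve_right h2S
end
end

section
/- The functions ψ_n(z) = (−z)^n (d/(z dz))^n (sin z / z) satisfy the spherical Bessel differential equation: z²ψ_n''(z) + 2zψ_n'(z) + (z² − n(n+1))ψ_n(z) = 0 for z ≠ 0. -/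
noncomputable section

/-- The operator \`f ↦ f'(z)/z\`. -/
def Dop (f : ℝ → ℝ) : ℝ → ℝ := fun z => deriv f z / z

/-- \`ψ_n(z) = (−z)^n (d/(z dz))^n (sin z / z)\`. -/
def psi (n : ℕ) (z : ℝ) : ℝ := (-z) ^ n * (Dop^[n] (fun w => Real.sin w / w)) z

/-!
Write `D = Dop`. The radial Helmholtz operator `g'' + (a / z) g' + g` equals
`H_a g = z² D²g + (a + 1) Dg + g` away from `0`, and `D (H_a g) = H_{a+2} (D g)` there, because
`D (z² f) = 2 f + z² D f`. Since `sin z / z = D (-cos)` and `(-cos)'' + (-cos) = 0`, i.e.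
`H_0 (-cos) = 0`, induction gives `H_{2n+2} (Dⁿ (sin z / z)) = 0`. Finally, multiplying a solution
`g` of `z g'' + (2n + 2) g' + z g = 0` by a solution `p` of the Euler equation of index `n`,
such as `(-z)ⁿ`, gives a solution of the spherical Bessel equation of order `n`.
-/

open Real Filter Topology
open scoped ContDiff

lemma mul_deriv_const_mul_pow (c : ℝ) (n : ℕ) (z : ℝ) :
    z * deriv (fun w => c * w ^ n) z = n * (c * z ^ n) := by
  rw [deriv_const_mul_field, deriv_pow_field]
  cases n with
  | zero => simp
  | succ m => simp only [Nat.add_sub_cancel, pow_succ]; ring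

lemma sq_mul_deriv_deriv_const_mul_pow (c : ℝ) (n : ℕ) (z : ℝ) :
    z ^ 2 * deriv (deriv fun w => c * w ^ n) z = n * (n - 1) * (c * z ^ n) := by
  have hderiv : deriv (fun w => c * w ^ n) = fun w => c * n * w ^ (n - 1) := by
    funext w
    rw [deriv_const_mul_field, deriv_pow_field, mul_assoc]
  rw [hderiv, deriv_const_mul_field, deriv_pow_field]
  rcases n with _ | _ | m
  · simp
  · simp
  · simp only [Nat.add_sub_cancel, pow_succ]; push_cast; ring

lemma bessel_mul_of_euler {p g : ℝ → ℝ} {s : Set ℝ} {ν z : ℝ} (hs : IsOpen s) (hz : z ∈ s)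
    (hp : ContDiffOn ℝ 2 p s) (hg : ContDiffOn ℝ 2 g s)
    (hp₁ : z * deriv p z = ν * p z) (hp₂ : z ^ 2 * deriv (deriv p) z = ν * (ν - 1) * p z) :
    z ^ 2 * deriv (deriv fun w => p w * g w) z + 2 * z * deriv (fun w => p w * g w) z
        + (z ^ 2 - ν * (ν + 1)) * (p z * g z)
      = z * p z * (z * deriv (deriv g) z + (2 * ν + 2) * deriv g z + z * g z) := by
  have hdiff : ∀ {f : ℝ → ℝ}, ContDiffOn ℝ 2 f s → ∀ w ∈ s, DifferentiableAt ℝ f w :=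
    fun hf w hw => (hf.differentiableOn (by norm_num)).differentiableAt (hs.mem_nhds hw)
  have hdiff' : ∀ {f : ℝ → ℝ}, ContDiffOn ℝ 2 f s → DifferentiableAt ℝ (deriv f) z :=
    fun hf => ((hf.deriv_of_isOpen (m := 1) hs (by norm_num)).differentiableOn
      one_ne_zero).differentiableAt (hs.mem_nhds hz)
  have hprod : deriv (fun w => p w * g w) =ᶠ[𝓝 z] fun w => deriv p w * g w + p w * deriv g w :=
    eventually_of_mem (hs.mem_nhds hz) fun w hw => deriv_mul (hdiff hp w hw) (hdiff hg w hw)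
  have hprod₂ : deriv (deriv fun w => p w * g w) z
      = deriv (deriv p) z * g z + 2 * deriv p z * deriv g z + p z * deriv (deriv g) z := by
    rw [hprod.deriv_eq]
    refine (((hdiff' hp).hasDerivAt.mul (hdiff hg z hz).hasDerivAt).add
      ((hdiff hp z hz).hasDerivAt.mul (hdiff' hg).hasDerivAt)).deriv.trans ?_
    ring
  rw [hprod₂, hprod.eq_of_nhds]
  linear_combination g z * hp₂ + (2 * g z + 2 * z * deriv g z) * hp₁

section Dop

variable {g : ℝ → ℝ} {z : ℝ}

lemma Dop_neg_cos : Dop (fun w => -cos w) = fun w => sin w / w := by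
  funext w
  simp [Dop]

lemma contDiffOn_iterate_Dop (hg : ContDiffOn ℝ ∞ g {0}ᶜ) (n : ℕ) :
    ContDiffOn ℝ ∞ (Dop^[n] g) {0}ᶜ := by
  induction n with
  | zero => exact hg
  | succ n ih =>
    rw [Function.iterate_succ_apply']
    exact (ih.deriv_of_isOpen isOpen_compl_singleton le_rfl).div contDiffOn_id fun _ hw => hw

lemma differentiableAt_iterate_Dop (hg : ContDiffOn ℝ ∞ g {0}ᶜ) (n : ℕ) (hz : z ≠ 0) :
    DifferentiableAt ℝ (Dop^[n] g) z :=
  ((contDiffOn_iterate_Dop hg n).differentiableOn (by simp)).differentiableAt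
    (isOpen_compl_singleton.mem_nhds hz)

lemma deriv_eventuallyEq_mul_Dop (hz : z ≠ 0) : deriv g =ᶠ[𝓝 z] fun w => w * Dop g w :=
  eventually_of_mem (isOpen_compl_singleton.mem_nhds hz) fun _ hw => (mul_div_cancel₀ _ hw).symm

/-- The radial Helmholtz operator `g'' + (a / z) g' + g` (see `mul_radialHelmholtz`), written
through `Dop` so that `Dop` commutes with it up to the shift `a ↦ a + 2`. -/
def radialHelmholtz (a : ℝ) (g : ℝ → ℝ) : ℝ → ℝ :=
  fun z => z ^ 2 * Dop (Dop g) z + (a + 1) * Dop g z + g z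

lemma mul_radialHelmholtz (a : ℝ) (hz : z ≠ 0) (hDg : DifferentiableAt ℝ (Dop g) z) :
    z * radialHelmholtz a g z = z * deriv (deriv g) z + a * deriv g z + z * g z := by
  have hderiv₂ : deriv (deriv g) z = Dop g z + z * deriv (Dop g) z := by
    rw [(deriv_eventuallyEq_mul_Dop hz).deriv_eq]
    exact ((hasDerivAt_id z).mul hDg.hasDerivAt).deriv.trans (by simp)
  rw [hderiv₂, (deriv_eventuallyEq_mul_Dop hz).eq_of_nhds,
    (deriv_eventuallyEq_mul_Dop hz).eq_of_nhds, radialHelmholtz]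
  ring

lemma Dop_radialHelmholtz (a : ℝ) (hz : z ≠ 0) (hg : DifferentiableAt ℝ g z)
    (hDg : DifferentiableAt ℝ (Dop g) z) (hDDg : DifferentiableAt ℝ (Dop (Dop g)) z) :
    Dop (radialHelmholtz a g) z = radialHelmholtz (a + 2) (Dop g) z := by
  have hderiv : HasDerivAt (radialHelmholtz a g) _ z :=
    (((hasDerivAt_pow 2 z).mul hDDg.hasDerivAt).add (hDg.hasDerivAt.const_mul (a + 1))).add
      hg.hasDerivAt
  rw [Dop, hderiv.deriv, (deriv_eventuallyEq_mul_Dop hz).eq_of_nhds,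
    (deriv_eventuallyEq_mul_Dop hz).eq_of_nhds, (deriv_eventuallyEq_mul_Dop hz).eq_of_nhds,
    radialHelmholtz]
  field_simp
  ring

end Dop

lemma radialHelmholtz_iterate_Dop_neg_cos (n : ℕ) {z : ℝ} (hz : z ≠ 0) :
    radialHelmholtz (2 * n) (Dop^[n] fun w => -cos w) z = 0 := by
  have hsmooth : ContDiffOn ℝ ∞ (fun w => -cos w) {0}ᶜ := contDiff_cos.neg.contDiffOn
  induction n generalizing z with
  | zero =>
    have h := mul_radialHelmholtz 0 hz (differentiableAt_iterate_Dop hsmooth 1 hz)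
    have hcos : deriv (deriv fun w => -cos w) z = cos z := by simp
    rw [hcos] at h
    rw [Nat.cast_zero, mul_zero, Function.iterate_zero, id]
    exact (mul_eq_zero.mp (h.trans (by ring))).resolve_left hz
  | succ n ih =>
    have hvanish : radialHelmholtz (2 * n) (Dop^[n] fun w => -cos w) =ᶠ[𝓝 z] fun _ => 0 :=
      eventually_of_mem (isOpen_compl_singleton.mem_nhds hz) fun _ hw => ih hw
    have hD : Dop (radialHelmholtz (2 * n) (Dop^[n] fun w => -cos w)) z = 0 := by
      rw [Dop, hvanish.deriv_eq, deriv_const, zero_div]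
    have hdiff k : DifferentiableAt ℝ (Dop^[k] fun w => -cos w) z :=
      differentiableAt_iterate_Dop hsmooth k hz
    rw [Dop_radialHelmholtz _ hz (hdiff n)
      (by simpa only [← Function.iterate_succ_apply' Dop] using hdiff (n + 1))
      (by simpa only [← Function.iterate_succ_apply' Dop] using hdiff (n + 2)),
      ← Function.iterate_succ_apply' Dop] at hD
    convert hD using 2
    push_cast
    ring

lemma ode_iterate_Dop_sinc (n : ℕ) {z : ℝ} (hz : z ≠ 0) :
    z * deriv (deriv (Dop^[n] fun w => sin w / w)) z
      + (2 * n + 2) * deriv (Dop^[n] fun w => sin w / w) z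
      + z * (Dop^[n] fun w => sin w / w) z = 0 := by
  have hsinc : (Dop^[n] fun w => sin w / w) = Dop^[n + 1] fun w => -cos w := by
    rw [Function.iterate_succ_apply, Dop_neg_cos]
  have hsmooth : ContDiffOn ℝ ∞ (fun w => -cos w) {0}ᶜ := contDiff_cos.neg.contDiffOn
  have h := mul_radialHelmholtz (g := Dop^[n + 1] fun w => -cos w) (2 * (n + 1 : ℕ)) hz
    (by simpa only [← Function.iterate_succ_apply' Dop] using
      differentiableAt_iterate_Dop hsmooth (n + 2) hz)
  rw [radialHelmholtz_iterate_Dop_neg_cos (n + 1) hz] at h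
  rw [hsinc]
  push_cast at h
  linarith

/-- `ψ_n` satisfies the spherical Bessel equation
`z²ψ'' + 2zψ' + (z² − n(n+1))ψ = 0` for `z ≠ 0`. -/
theorem psi_spherical_bessel (n : ℕ) (z : ℝ) (hz : z ≠ 0) :
    z ^ 2 * deriv (deriv (psi n)) z + 2 * z * deriv (psi n) z
      + (z ^ 2 - n * (n + 1)) * psi n z = 0 := by
  set G := Dop^[n] fun w => sin w / w
  have hpsi : psi n = fun w => (-1) ^ n * w ^ n * G w := funext fun w => by rw [psi, neg_pow]
  have hG : ContDiffOn ℝ ∞ G {0}ᶜ :=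
    contDiffOn_iterate_Dop (contDiff_sin.contDiffOn.div contDiffOn_id fun _ hw => hw) n
  rw [hpsi, bessel_mul_of_euler (p := fun w => (-1) ^ n * w ^ n) isOpen_compl_singleton hz
    (contDiff_const.mul (contDiff_id.pow n)).contDiffOn (hG.of_le (WithTop.coe_le_coe.mpr le_top))
    (mul_deriv_const_mul_pow _ n z) (sq_mul_deriv_deriv_const_mul_pow _ n z),
    ode_iterate_Dop_sinc n hz, mul_zero]
end
end
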